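/- arXiv:2011.05607 — 4 statements merged into one kernel-verified Lean document; each statement's English description precedes it below -/
import Mathlib

section
/- Let k be an integer with 1 < k < d. The total number of non-empty exposed faces of ρ_{d,k} (including ρ_{d,k} itself) is at least 3^d; in particular, ρ_{d,k} satisfies Kalai's 3^d conjecture for centrally symmetric polytopes. -/
open scoped Pointwise

noncomputable section

/-- The hypercube `γ_d = [-1,1]^d` in `ℝ^d`. -/
def hcube (d : ℕ) : Set (EuclideanSpace ℝ (Fin d)) := {x | ∀ i, |x i| ≤ 1}

/-- The cross-polytope `β_d = {x : ∑ |x_i| ≤ 1}` in `ℝ^d`. -/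
def cross (d : ℕ) : Set (EuclideanSpace ℝ (Fin d)) := {x | ∑ i, |x i| ≤ 1}

/-- The polytope `ρ_{d,k} = conv(β_d ∪ (1/k)γ_d)`. -/
def rho (d : ℕ) (k : ℝ) : Set (EuclideanSpace ℝ (Fin d)) :=
  convexHull ℝ (cross d ∪ (1 / k) • hcube d)

/-!
Every sign vector `s ∈ {-1,0,1}^d` exposes the face `F_s` of `ρ_{d,k}` on which `⟨s, ·⟩` attains
its maximum `max 1 (|supp s| / k)`, the larger of its maxima over `β_d` and over `(1/k)γ_d`.
For `s ≠ 0`, the face `F_s` contains a vertex `a e_i` of `β_d` iff `|supp s| ≤ k` and `a = s_i`,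
and it contains a vertex `u / k` of `(1/k)γ_d` iff `|supp s| ≥ k` and `u` agrees with `s` on
`supp s`. In either regime `s` can be read off from `F_s`, so `s ↦ F_s` is injective. There are
finitely many exposed faces, since `ρ_{d,k}` is the convex hull of finitely many points and an
exposed face is the convex hull of those of them it contains.
-/

open Set
open scoped InnerProductSpace

section ConvexHull

variable {E : Type*} [AddCommGroup E] [Module ℝ E]

theorem mem_convexHull_setOf_eq_of_forall_le {V : Set E} {l : E →ₗ[ℝ] ℝ} {M : ℝ} {x : E}
    (hV : ∀ v ∈ V, l v ≤ M) (hx : x ∈ convexHull ℝ V) (hlx : l x = M) :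
    x ∈ convexHull ℝ {v ∈ V | l v = M} := by
  set S := {v ∈ V | l v = M}
  set T := {v ∈ V | l v < M}
  have hVST : V = S ∪ T := by
    ext v
    exact ⟨fun hv => (hV v hv).eq_or_lt.imp (⟨hv, ·⟩) (⟨hv, ·⟩), fun h => h.elim (·.1) (·.1)⟩
  have hT_lt : convexHull ℝ T ⊆ {y | l y < M} :=
    convexHull_min (fun v hv => hv.2) (convex_halfSpace_lt l.isLinear M)
  rcases T.eq_empty_or_nonempty with hT | hT
  · rwa [hVST, hT, union_empty] at hx
  rcases S.eq_empty_or_nonempty with hS | hS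
  · rw [hVST, hS, empty_union] at hx
    exact absurd hlx (hT_lt hx).ne
  rw [hVST, convexHull_union hS hT, mem_convexJoin] at hx
  obtain ⟨a, ha, b, hb, α, β, hα, hβ, hαβ, rfl⟩ := hx
  have hla : l a = M := convexHull_min (fun v hv => hv.2) (convex_hyperplane l.isLinear M) ha
  have hlb : l b < M := hT_lt hb
  have hβ0 : β = 0 := by
    simp only [map_add, map_smul, smul_eq_mul, hla] at hlx
    have : β * (M - l b) = 0 := by linear_combination -hlx + M * hαβ
    exact (mul_eq_zero.mp this).resolve_right (sub_pos.mpr hlb).ne'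
  rw [hβ0, add_zero] at hαβ
  rwa [hβ0, hαβ, zero_smul, add_zero, one_smul]

variable [TopologicalSpace E]

theorem IsExposed.eq_convexHull_inter {V F : Set E} (hF : IsExposed ℝ (convexHull ℝ V) F) :
    F = convexHull ℝ (V ∩ F) := by
  refine subset_antisymm (fun x hx => ?_)
    (convexHull_min inter_subset_right (hF.convex (convex_convexHull ℝ V)))
  obtain ⟨l, rfl⟩ := hF ⟨x, hx⟩
  refine convexHull_mono ?_ (mem_convexHull_setOf_eq_of_forall_le (l := (l : E →ₗ[ℝ] ℝ))
    (fun v hv => hx.2 v (subset_convexHull ℝ V hv)) hx.1 rfl)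
  rintro v ⟨hv, hlv⟩
  exact ⟨hv, subset_convexHull ℝ V hv, fun y hy => hlv ▸ hx.2 y hy⟩

theorem Set.Finite.setOf_isExposed_convexHull {V : Set E} (hV : V.Finite) :
    {F | IsExposed ℝ (convexHull ℝ V) F}.Finite :=
  (hV.finite_subsets.image (convexHull ℝ)).subset fun F hF =>
    ⟨V ∩ F, inter_subset_left, hF.eq_convexHull_inter.symm⟩

end ConvexHull

namespace SignType

theorem abs_coe_le_one (a : SignType) : |(a : ℝ)| ≤ 1 := by
  cases a <;> simp

theorem abs_coe_of_ne_zero {a : SignType} (ha : a ≠ 0) : |(a : ℝ)| = 1 := by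
  cases a <;> simp_all

theorem coe_mul_le_abs (a : SignType) {x : ℝ} (hx : |x| ≤ 1) : (a : ℝ) * x ≤ |(a : ℝ)| := by
  have := abs_le.mp hx
  cases a <;> simp <;> linarith

theorem coe_mul_coe_eq_abs_iff {a b : SignType} : (a : ℝ) * b = |(a : ℝ)| ↔ a = 0 ∨ b = a := by
  cases a <;> cases b <;> simp <;> norm_num

end SignType

theorem sum_abs_coe_eq_hammingNorm {ι : Type*} [Fintype ι] (s : ι → SignType) :
    ∑ i, |(s i : ℝ)| = hammingNorm s := by
  rw [hammingNorm, Finset.natCast_card_filter]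
  refine Finset.sum_congr rfl fun i _ => ?_
  cases s i <;> simp

section Rho

variable {d : ℕ} {k : ℝ}

def signVec (s : Fin d → SignType) : EuclideanSpace ℝ (Fin d) :=
  WithLp.toLp 2 fun i => (s i : ℝ)

def signFace (k : ℝ) (s : Fin d → SignType) : Set (EuclideanSpace ℝ (Fin d)) :=
  (innerSL ℝ (signVec s)).toExposed (rho d k)

theorem signVec_zero : signVec (0 : Fin d → SignType) = 0 := by
  ext
  simp [signVec]

theorem signVec_mem_hcube (u : Fin d → SignType) : signVec u ∈ hcube d :=
  fun i => (u i).abs_coe_le_one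

theorem inner_signVec (s : Fin d → SignType) (x : EuclideanSpace ℝ (Fin d)) :
    ⟪signVec s, x⟫_ℝ = ∑ i, (s i : ℝ) * x i := by
  simp [signVec, PiLp.inner_apply, mul_comm]

theorem inner_signVec_le_of_mem_cross (s : Fin d → SignType) {x : EuclideanSpace ℝ (Fin d)}
    (hx : x ∈ cross d) : ⟪signVec s, x⟫_ℝ ≤ 1 := by
  rw [inner_signVec]
  refine (Finset.sum_le_sum fun i _ => ?_).trans hx
  calc (s i : ℝ) * x i ≤ |(s i : ℝ) * x i| := le_abs_self _
    _ = |(s i : ℝ)| * |x i| := abs_mul _ _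
    _ ≤ |x i| := mul_le_of_le_one_left (abs_nonneg _) (s i).abs_coe_le_one

theorem inner_signVec_le_of_mem_hcube (s : Fin d → SignType) {x : EuclideanSpace ℝ (Fin d)}
    (hx : x ∈ hcube d) : ⟪signVec s, x⟫_ℝ ≤ hammingNorm s := by
  rw [inner_signVec, ← sum_abs_coe_eq_hammingNorm]
  exact Finset.sum_le_sum fun i _ => (s i).coe_mul_le_abs (hx i)

theorem inner_signVec_signVec_eq_hammingNorm_iff (s u : Fin d → SignType) :
    ⟪signVec s, signVec u⟫_ℝ = hammingNorm s ↔ ∀ i, s i ≠ 0 → u i = s i := by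
  rw [inner_signVec, ← sum_abs_coe_eq_hammingNorm,
    Finset.sum_eq_sum_iff_of_le fun i _ => (s i).coe_mul_le_abs (signVec_mem_hcube u i)]
  simp only [signVec, PiLp.toLp_apply, Finset.mem_univ, true_imp_iff,
    SignType.coe_mul_coe_eq_abs_iff, or_iff_not_imp_left]

theorem inner_signVec_self (s : Fin d → SignType) : ⟪signVec s, signVec s⟫_ℝ = hammingNorm s :=
  (inner_signVec_signVec_eq_hammingNorm_iff s s).mpr fun _ _ => rfl

theorem single_mem_rho {a : ℝ} (ha : |a| ≤ 1) (i : Fin d) : EuclideanSpace.single i a ∈ rho d k :=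
  subset_convexHull ℝ _ (Or.inl (by simpa [cross, PiLp.single_apply, apply_ite] using ha))

theorem smul_signVec_mem_rho (u : Fin d → SignType) : (1 / k) • signVec u ∈ rho d k :=
  subset_convexHull ℝ _ (Or.inr (smul_mem_smul_set (signVec_mem_hcube u)))

theorem inner_signVec_le_of_mem_rho (hk : 0 ≤ k) (s : Fin d → SignType)
    {x : EuclideanSpace ℝ (Fin d)} (hx : x ∈ rho d k) :
    ⟪signVec s, x⟫_ℝ ≤ max 1 (hammingNorm s / k) := by
  refine convexHull_min ?_ (convex_halfSpace_le (innerₛₗ ℝ (signVec s)).isLinear _) hx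
  rintro y (hy | ⟨z, hz, rfl⟩)
  · exact (inner_signVec_le_of_mem_cross s hy).trans (le_max_left _ _)
  · rw [mem_ofPred_eq, innerₛₗ_apply_apply, inner_smul_right, one_div_mul_eq_div]
    exact (div_le_div_of_nonneg_right (inner_signVec_le_of_mem_hcube s hz) hk).trans
      (le_max_right _ _)

theorem exists_mem_rho_inner_signVec_eq {s : Fin d → SignType} (hs : s ≠ 0) :
    ∃ x ∈ rho d k, ⟪signVec s, x⟫_ℝ = max 1 (hammingNorm s / k) := by
  rcases max_choice (1 : ℝ) (hammingNorm s / k) with h | h <;> rw [h]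
  · obtain ⟨i, hi⟩ : ∃ i, s i ≠ 0 := Function.ne_iff.mp hs
    refine ⟨_, single_mem_rho (s i).abs_coe_le_one i, ?_⟩
    rw [EuclideanSpace.inner_single_right, ← SignType.abs_coe_of_ne_zero hi]
    simpa [signVec] using SignType.coe_mul_coe_eq_abs_iff.mpr (Or.inr rfl)
  · exact ⟨_, smul_signVec_mem_rho s, by
      rw [inner_smul_right, inner_signVec_self, one_div_mul_eq_div]⟩

theorem mem_signFace_iff (hk : 0 ≤ k) {s : Fin d → SignType} (hs : s ≠ 0)
    {x : EuclideanSpace ℝ (Fin d)} :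
    x ∈ signFace k s ↔ x ∈ rho d k ∧ ⟪signVec s, x⟫_ℝ = max 1 (hammingNorm s / k) := by
  obtain ⟨y, hy, hsy⟩ := exists_mem_rho_inner_signVec_eq (k := k) hs
  simp only [signFace, ContinuousLinearMap.toExposed, innerSL_apply_apply, mem_ofPred_eq]
  exact and_congr_right fun hx =>
    ⟨fun h => le_antisymm (inner_signVec_le_of_mem_rho hk s hx) (hsy ▸ h y hy),
      fun h z hz => h ▸ inner_signVec_le_of_mem_rho hk s hz⟩

theorem signFace_zero : signFace k (0 : Fin d → SignType) = rho d k := by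
  ext x
  simp [signFace, ContinuousLinearMap.toExposed, signVec_zero]

theorem single_mem_signFace_iff (hk : 0 < k) {s : Fin d → SignType} (hs : s ≠ 0) {a : SignType}
    (ha : a ≠ 0) (i : Fin d) :
    EuclideanSpace.single i (a : ℝ) ∈ signFace k s ↔ hammingNorm s ≤ k ∧ s i = a := by
  rw [mem_signFace_iff hk.le hs, EuclideanSpace.inner_single_right, ← div_le_one hk,
    ← max_eq_left_iff]
  simp only [single_mem_rho a.abs_coe_le_one i, true_and, signVec, PiLp.toLp_apply,
    conj_trivial]
  have hle : (a : ℝ) * s i ≤ 1 := a.abs_coe_of_ne_zero ha ▸ a.coe_mul_le_abs (s i).abs_coe_le_one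
  have heq : (a : ℝ) * s i = 1 ↔ s i = a := by
    rw [← a.abs_coe_of_ne_zero ha, SignType.coe_mul_coe_eq_abs_iff, or_iff_right ha]
  constructor
  · intro h
    have hmax : max 1 ((hammingNorm s : ℝ) / k) = 1 := le_antisymm (h ▸ hle) (le_max_left _ _)
    exact ⟨hmax, heq.mp (h.trans hmax)⟩
  · rintro ⟨hmax, hsi⟩
    rw [hmax, heq.mpr hsi]

theorem smul_signVec_mem_signFace_iff (hk : 0 < k) {s : Fin d → SignType} (hs : s ≠ 0)
    (u : Fin d → SignType) :
    (1 / k) • signVec u ∈ signFace k s ↔ k ≤ hammingNorm s ∧ ∀ i, s i ≠ 0 → u i = s i := by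
  rw [mem_signFace_iff hk.le hs, inner_smul_right, one_div_mul_eq_div,
    ← inner_signVec_signVec_eq_hammingNorm_iff, ← one_le_div hk]
  simp only [smul_signVec_mem_rho, true_and]
  have hle := inner_signVec_le_of_mem_hcube s (signVec_mem_hcube u)
  constructor
  · intro h
    have heq : ⟪signVec s, signVec u⟫_ℝ = hammingNorm s :=
      le_antisymm hle ((div_le_div_iff_of_pos_right hk).mp (h ▸ le_max_right _ _))
    rw [heq] at h
    exact ⟨h ▸ le_max_left _ _, heq⟩
  · rintro ⟨h1, heq⟩
    rw [heq, max_eq_right h1]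

theorem signFace_ne_rho (hk : 0 < k) {s : Fin d → SignType} (hs : s ≠ 0) :
    signFace k s ≠ rho d k := by
  intro h
  obtain ⟨i, hi⟩ : ∃ i, s i ≠ 0 := Function.ne_iff.mp hs
  have hmem : EuclideanSpace.single i ((-s i : SignType) : ℝ) ∈ signFace k s :=
    h ▸ single_mem_rho (-s i).abs_coe_le_one i
  have := ((single_mem_signFace_iff hk hs (SignType.neg_eq_zero_iff.not.mpr hi) i).mp hmem).2
  generalize s i = a at hi this
  revert a
  decide

theorem forall_eq_of_signFace_eq (hk : 0 < k) {s t : Fin d → SignType} (hs : s ≠ 0) (ht : t ≠ 0)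
    (h : signFace k s = signFace k t) : ∀ i, s i ≠ 0 → t i = s i := by
  rcases le_or_gt (hammingNorm s : ℝ) k with hsk | hsk
  · intro i hi
    exact ((single_mem_signFace_iff hk ht hi i).mp
      (h ▸ (single_mem_signFace_iff hk hs hi i).mpr ⟨hsk, rfl⟩)).2
  · have htk : k ≤ hammingNorm t := by
      by_contra! htk
      obtain ⟨j, hj⟩ : ∃ j, t j ≠ 0 := Function.ne_iff.mp ht
      exact hsk.not_ge ((single_mem_signFace_iff hk hs hj j).mp
        (h ▸ (single_mem_signFace_iff hk ht hj j).mpr ⟨htk.le, rfl⟩)).1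
    exact ((smul_signVec_mem_signFace_iff hk hs t).mp
      (h ▸ (smul_signVec_mem_signFace_iff hk ht t).mpr ⟨htk, fun _ _ => rfl⟩)).2

theorem signFace_injective (hk : 0 < k) : Function.Injective (signFace (d := d) k) := by
  intro s t h
  rcases eq_or_ne s 0 with rfl | hs
  · by_contra ht
    exact signFace_ne_rho hk (Ne.symm ht) (h.symm.trans signFace_zero)
  rcases eq_or_ne t 0 with rfl | ht
  · exact absurd (h.trans signFace_zero) (signFace_ne_rho hk hs)
  have hst := forall_eq_of_signFace_eq hk hs ht h
  have hts := forall_eq_of_signFace_eq hk ht hs h.symm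
  funext i
  by_cases hsi : s i = 0
  · by_cases hti : t i = 0
    · rw [hsi, hti]
    · exact hts i hti
  · exact (hst i hsi).symm

theorem signFace_nonempty (hk : 0 ≤ k) (s : Fin d → SignType) : (signFace k s).Nonempty := by
  rcases eq_or_ne s 0 with rfl | hs
  · rw [signFace_zero]
    exact ⟨0, subset_convexHull ℝ _ (Or.inl (by simp [cross]))⟩
  · obtain ⟨x, hx, hsx⟩ := exists_mem_rho_inner_signVec_eq (k := k) hs
    exact ⟨x, (mem_signFace_iff hk hs).mpr ⟨hx, hsx⟩⟩

theorem hcube_subset_convexHull : hcube d ⊆ convexHull ℝ (range (signVec (d := d))) := by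
  intro x hx
  have hpi : x.ofLp ∈ convexHull ℝ (univ.pi fun _ => ({-1, 1} : Set ℝ)) :=
    mem_convexHull_pi fun i _ => by
      rw [convexHull_pair, segment_eq_Icc (by norm_num)]
      exact abs_le.mp (hx i)
  have := mem_image_of_mem (WithLp.linearEquiv 2 ℝ (Fin d → ℝ)).symm.toLinearMap hpi
  rw [LinearMap.image_convexHull] at this
  refine convexHull_mono ?_ this
  rintro - ⟨y, hy, rfl⟩
  refine ⟨fun i => SignType.sign (y i), ?_⟩
  ext i
  obtain h | h : y i = -1 ∨ y i = 1 := hy i trivial <;> simp [signVec, h]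

theorem cross_subset_convexHull :
    cross d ⊆ convexHull ℝ
      (insert 0 (range fun p : Fin d × SignType => EuclideanSpace.single p.1 (p.2 : ℝ))) := by
  intro x hx
  convert (convex_convexHull ℝ _).sum_mem (t := Finset.univ)
    (w := fun o : Option (Fin d) => o.elim (1 - ∑ i, |x i|) fun i => |x i|)
    (z := fun o => o.elim 0 fun i => EuclideanSpace.single i (SignType.sign (x i) : ℝ)) ?_ ?_ ?_
    using 1
  · ext j
    simp [Fintype.sum_option, Pi.single_apply]
  · rintro (_ | i) _
    exacts [sub_nonneg.mpr hx, abs_nonneg _]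
  · simp [Fintype.sum_option]
  · rintro (_ | i) _
    exacts [subset_convexHull ℝ _ (mem_insert _ _),
      subset_convexHull ℝ _ (mem_insert_of_mem _ ⟨(i, SignType.sign (x i)), rfl⟩)]

theorem rho_eq_convexHull (k : ℝ) :
    rho d k = convexHull ℝ
      ((range fun p : Fin d × SignType => EuclideanSpace.single p.1 (p.2 : ℝ)) ∪
        range fun u => (1 / k) • signVec u) := by
  refine subset_antisymm (convexHull_min ?_ (convex_convexHull ℝ _))
    (convexHull_min ?_ (convex_convexHull ℝ _))
  · rintro x (hx | ⟨y, hy, rfl⟩)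
    · refine convexHull_mono ?_ (cross_subset_convexHull hx)
      rintro v (rfl | hv)
      · exact Or.inr ⟨0, by simp [signVec_zero]⟩
      · exact Or.inl hv
    · have := smul_mem_smul_set (a := 1 / k) (hcube_subset_convexHull hy)
      rw [← convexHull_smul] at this
      refine convexHull_mono ?_ this
      rintro - ⟨-, ⟨u, rfl⟩, rfl⟩
      exact Or.inr ⟨u, rfl⟩
  · rintro - (⟨⟨i, a⟩, rfl⟩ | ⟨u, rfl⟩)
    exacts [single_mem_rho a.abs_coe_le_one i, smul_signVec_mem_rho u]

theorem finite_setOf_isExposed_rho (k : ℝ) : {F | IsExposed ℝ (rho d k) F}.Finite := by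
  rw [rho_eq_convexHull]
  exact ((finite_range _).union (finite_range _)).setOf_isExposed_convexHull

end Rho

theorem kalai_for_rho_general (d k : ℕ) (hk1 : 1 < k) :
    3 ^ d ≤ {F : Set (EuclideanSpace ℝ (Fin d)) |
      IsExposed ℝ (rho d (k : ℝ)) F ∧ F.Nonempty}.ncard := by
  have hk : (0 : ℝ) < k := by exact_mod_cast zero_lt_one.trans hk1
  have hcard : Fintype.card SignType = 3 := rfl
  calc 3 ^ d = (univ : Set (Fin d → SignType)).ncard := by simp [ncard_univ, hcard]
    _ ≤ _ := ncard_le_ncard_of_injOn (signFace k)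
      (fun s _ => And.intro ContinuousLinearMap.toExposed.isExposed (signFace_nonempty hk.le s))
      (signFace_injective hk).injOn ((finite_setOf_isExposed_rho k).subset fun _ hF => hF.1)

/-- For integer `k` with `1 < k < d`, the polytope `ρ_{d,k}` has at least `3^d` non-empty
exposed faces (including `ρ_{d,k}` itself), so it satisfies Kalai's `3^d` conjecture. -/
theorem kalai_for_rho (d k : ℕ) (hk1 : 1 < k) (hkd : k < d) :
    3 ^ d ≤ {F : Set (EuclideanSpace ℝ (Fin d)) |
      IsExposed ℝ (rho d (k : ℝ)) F ∧ F.Nonempty}.ncard :=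
  kalai_for_rho_general d k hk1
end
end

section
/- Let d ≥ 1 and let k be an integer with 1 ≤ k ≤ d. Then ρ_{d,k} = {x ∈ ℝ^d : for every subset I ⊆ {1,…,d} with |I| = k, ∑_{i∈I} |x_i| ≤ 1}. -/
/-!
The right-hand side is convex and contains both `β_d` and `(1/k)γ_d`, which gives `⊆`.
Conversely, for `x` on the right let `τ` be the `k`-th largest `|x_i|` and split `x = u + v` by
soft thresholding: `v_i` is `x_i` clamped to `[-τ, τ]`. Then `|v_i| ≤ τ`, while
`∑ |u_i| = ∑_{i ∈ I} (|x_i| - τ) ≤ 1 - kτ` for `I` the indices of `k` largest `|x_i|`, so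
`x ∈ (1 - kτ) β_d + kτ · (1/k)γ_d ⊆ ρ_{d,k}`.
-/

open scoped Pointwise

noncomputable section

theorem add_mem_convexHull_union {E : Type*} [AddCommGroup E] [Module ℝ E] {C Q : Set E}
    (h0 : (0 : E) ∈ C) {s t : ℝ} (hs : 0 ≤ s) (ht : 0 ≤ t) (hst : s + t ≤ 1) {a b : E}
    (ha : a ∈ s • C) (hb : b ∈ t • Q) : a + b ∈ convexHull ℝ (C ∪ Q) := by
  have hK := convex_convexHull ℝ (C ∪ Q)
  have hab : a + b ∈ (s + t) • convexHull ℝ (C ∪ Q) := by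
    rw [hK.add_smul hs ht]
    exact Set.add_mem_add
      (Set.smul_set_mono (Set.subset_union_left.trans (subset_convexHull ℝ _)) ha)
      (Set.smul_set_mono (Set.subset_union_right.trans (subset_convexHull ℝ _)) hb)
  obtain ⟨y, hy, hxy⟩ := hab
  exact hxy ▸ hK.smul_mem_of_zero_mem (subset_convexHull ℝ _ (Or.inl h0)) hy
    ⟨add_nonneg hs ht, hst⟩

theorem abs_sub_clamp {t τ : ℝ} (hτ : 0 ≤ τ) :
    |t - max (-τ) (min t τ)| = max (|t| - τ) 0 := by
  simp only [abs_eq_max_neg, max_def, min_def]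
  split_ifs <;> linarith

theorem abs_clamp_le {t τ : ℝ} (hτ : 0 ≤ τ) : |max (-τ) (min t τ)| ≤ τ :=
  abs_le.2 ⟨le_max_left _ _, max_le (by linarith) (min_le_right _ _)⟩

open Finset

theorem le_of_sum_le_sum_erase_insert {ι : Type*} [DecidableEq ι] {f : ι → ℝ} {I : Finset ι}
    {i j : ι} (hi : i ∈ I) (hj : j ∉ I)
    (hmax : ∑ l ∈ insert j (I.erase i), f l ≤ ∑ l ∈ I, f l) : f j ≤ f i := by
  rw [sum_insert fun h ↦ hj (mem_of_mem_erase h), ← add_sum_erase I f hi] at hmax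
  linarith

theorem exists_sum_max_sub_add_le {ι : Type*} [Fintype ι] {f : ι → ℝ} (hf : 0 ≤ f) {k : ℕ}
    (hk : 0 < k) (hkι : k ≤ Fintype.card ι) {c : ℝ}
    (h : ∀ I : Finset ι, I.card = k → ∑ i ∈ I, f i ≤ c) :
    ∃ τ, 0 ≤ τ ∧ ∑ i, max (f i - τ) 0 + k * τ ≤ c := by
  classical
  obtain ⟨I, hIk, hImax⟩ := exists_max_image (powersetCard k univ) (fun J ↦ ∑ i ∈ J, f i)
    (powersetCard_nonempty.2 (by simpa using hkι))
  rw [mem_powersetCard_univ] at hIk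
  obtain ⟨i₀, hi₀, hmin⟩ := exists_min_image I f (card_pos.1 (hIk ▸ hk))
  have hout : ∀ j ∉ I, f j ≤ f i₀ := fun j hj ↦
    le_of_sum_le_sum_erase_insert hi₀ hj <| hImax _ <| mem_powersetCard_univ.2 <| by
      rw [card_insert_of_notMem fun h ↦ hj (mem_of_mem_erase h), card_erase_of_mem hi₀, hIk]
      omega
  have hsum : ∑ i, max (f i - f i₀) 0 = ∑ i ∈ I, (f i - f i₀) := by
    rw [← sum_subset (subset_univ I) fun j _ hj ↦ max_eq_right (sub_nonpos.2 (hout j hj))]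
    exact sum_congr rfl fun i hi ↦ max_eq_left (sub_nonneg.2 (hmin i hi))
  refine ⟨f i₀, hf i₀, ?_⟩
  rw [hsum, sum_sub_distrib, sum_const, hIk, nsmul_eq_mul]
  linarith [h I hIk]

variable {d : ℕ}

theorem mem_smul_cross {u : EuclideanSpace ℝ (Fin d)} {s : ℝ} (hs : 0 ≤ s)
    (hu : ∑ i, |u i| ≤ s) : u ∈ s • cross d := by
  rcases hs.eq_or_lt with rfl | hs
  · have : u = 0 := by
      ext i
      simpa using (sum_eq_zero_iff_of_nonneg fun i _ ↦ abs_nonneg (u i)).1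
        (le_antisymm hu (sum_nonneg fun i _ ↦ abs_nonneg _)) i (mem_univ i)
    exact this ▸ Set.zero_mem_smul_set (by simp [cross])
  · rw [Set.mem_smul_set_iff_inv_smul_mem₀ hs.ne']
    change ∑ i, |s⁻¹ * u i| ≤ 1
    simp_rw [abs_mul, ← mul_sum, abs_inv, abs_of_pos hs]
    exact inv_mul_le_one_of_le₀ hu hs.le

theorem mem_smul_hcube {v : EuclideanSpace ℝ (Fin d)} {t : ℝ} (ht : 0 ≤ t)
    (hv : ∀ i, |v i| ≤ t) : v ∈ t • hcube d := by
  rcases ht.eq_or_lt with rfl | ht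
  · have : v = 0 := by
      ext i
      simpa using hv i
    exact this ▸ Set.zero_mem_smul_set (by simp [hcube])
  · rw [Set.mem_smul_set_iff_inv_smul_mem₀ ht.ne']
    intro i
    change |t⁻¹ * v i| ≤ 1
    rw [abs_mul, abs_inv, abs_of_pos ht]
    exact inv_mul_le_one_of_le₀ (hv i) ht.le

theorem convex_setOf_sum_abs_le (I : Finset (Fin d)) (r : ℝ) :
    Convex ℝ {x : EuclideanSpace ℝ (Fin d) | ∑ i ∈ I, |x i| ≤ r} := by
  intro x hx y hy a b ha hb hab
  calc ∑ i ∈ I, |a * x i + b * y i|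
      ≤ ∑ i ∈ I, (a * |x i| + b * |y i|) := sum_le_sum fun i _ ↦ by
        simpa [abs_mul, abs_of_nonneg ha, abs_of_nonneg hb] using abs_add_le (a * x i) (b * y i)
    _ = a * ∑ i ∈ I, |x i| + b * ∑ i ∈ I, |y i| := by rw [sum_add_distrib, mul_sum, mul_sum]
    _ ≤ a * r + b * r := by gcongr <;> assumption
    _ = r := by rw [← add_mul, hab, one_mul]

theorem sum_abs_le_one_of_mem_cross {x : EuclideanSpace ℝ (Fin d)} (hx : x ∈ cross d)
    (I : Finset (Fin d)) : ∑ i ∈ I, |x i| ≤ 1 :=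
  (sum_le_sum_of_subset_of_nonneg (subset_univ I) fun _ _ _ ↦ abs_nonneg _).trans hx

theorem sum_abs_le_one_of_mem_smul_hcube {k : ℕ} {x : EuclideanSpace ℝ (Fin d)}
    (hx : x ∈ (1 / (k : ℝ)) • hcube d) {I : Finset (Fin d)} (hI : I.card = k) :
    ∑ i ∈ I, |x i| ≤ 1 := by
  obtain ⟨y, hy, rfl⟩ := hx
  calc ∑ i ∈ I, |1 / (k : ℝ) * y i| ≤ ∑ _i ∈ I, 1 / (k : ℝ) := sum_le_sum fun i _ ↦ by
        rw [abs_mul, abs_of_nonneg (by positivity)]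
        exact mul_le_of_le_one_right (by positivity) (hy i)
    _ ≤ 1 := by
        rw [sum_const, hI, nsmul_eq_mul, mul_one_div]
        exact div_self_le_one _

theorem rho_subset (k : ℕ) :
    rho d k ⊆ {x | ∀ I : Finset (Fin d), I.card = k → ∑ i ∈ I, |x i| ≤ 1} := by
  refine convexHull_min ?_ ?_
  · rintro x (hx | hx) I hI
    exacts [sum_abs_le_one_of_mem_cross hx I, sum_abs_le_one_of_mem_smul_hcube hx hI]
  · simp only [Set.ofPred_forall]
    exact convex_iInter₂ fun I _ ↦ convex_setOf_sum_abs_le I 1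

theorem subset_rho {k : ℕ} (hk : 0 < k) (hkd : k ≤ d) :
    {x | ∀ I : Finset (Fin d), I.card = k → ∑ i ∈ I, |x i| ≤ 1} ⊆ rho d k := by
  intro x hx
  obtain ⟨τ, hτ, hτx⟩ := exists_sum_max_sub_add_le (f := fun i ↦ |x i|) (fun i ↦ abs_nonneg _)
    hk (by simpa using hkd) hx
  have hk0 : (k : ℝ) ≠ 0 := by positivity
  have hpos : 0 ≤ ∑ i, max (|x i| - τ) 0 := sum_nonneg fun i _ ↦ le_max_right _ _
  set v : EuclideanSpace ℝ (Fin d) := WithLp.toLp 2 fun i ↦ max (-τ) (min (x i) τ)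
  have hv : v ∈ ((k : ℝ) * τ) • (1 / (k : ℝ)) • hcube d := by
    rw [smul_smul, show (k : ℝ) * τ * (1 / k) = τ by field_simp]
    exact mem_smul_hcube hτ fun i ↦ abs_clamp_le hτ
  have hu : x - v ∈ (1 - k * τ) • cross d := by
    have hsum : ∑ i, |(x - v) i| = ∑ i, max (|x i| - τ) 0 :=
      sum_congr rfl fun i _ ↦ abs_sub_clamp hτ
    exact mem_smul_cross (by linarith) (by linarith)
  have := add_mem_convexHull_union (by simp [cross]) (by linarith) (by positivity)
    (by linarith) hu hv
  rwa [sub_add_cancel] at this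

theorem rho_eq_inter_halfspaces_general (d k : ℕ) (hk1 : 1 ≤ k) (hkd : k ≤ d) :
    rho d (k : ℝ) = {x : EuclideanSpace ℝ (Fin d) |
      ∀ I : Finset (Fin d), I.card = k → ∑ i ∈ I, |x i| ≤ 1} :=
  (rho_subset k).antisymm (subset_rho hk1 hkd)

/-- For integer `k` with `1 ≤ k ≤ d`, `ρ_{d,k}` is the set of points `x ∈ ℝ^d` such that the
absolute values of any `k` coordinates of `x` sum to at most `1`. -/
theorem rho_eq_inter_halfspaces (d k : ℕ) (hd : 1 ≤ d) (hk1 : 1 ≤ k) (hkd : k ≤ d) :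
    rho d (k : ℝ) = {x : EuclideanSpace ℝ (Fin d) |
      ∀ I : Finset (Fin d), I.card = k → ∑ i ∈ I, |x i| ≤ 1} :=
  rho_eq_inter_halfspaces_general d k hk1 hkd
end
end

section
/- Let d ≥ 1, let l and i be integers with 0 ≤ i < l ≤ d, and let k be a real number with l ≤ k ≤ d. In ℝ^d, let G = {x ∈ [−1,1]^d : x_1 = ⋯ = x_l = 1}, and let A be the affine span of G ∪ {k e_1, …, k e_i}. Then the Euclidean distance from the point k e_{i+1} to A equals k · √((k² − 2(i+1)k + (i+1)l) / (k² − 2ik + il)). -/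
noncomputable section

/-!
The point `p_t = c + t ∑_{j<i} (k e_j - c)`, where `c` is the centre of the face, lies in the
affine span for every `t`. The vector `u = k e_{i+1} - p_t` has constant inner product
`k - (1 - ti) l - tki` with the face and `-(1 - ti) k - tk²` with the pulled points; the two agree
exactly when `t (k² - 2ik + il) = l - 2k`. For that `t`, `u` is normal to the span, so the distance
is `‖u‖`, computed from the Gram matrix of `e_{i+1}`, `c` and `∑_{j<i} e_j`.
-/

open scoped RealInnerProductSpace

section InnerProductSpace

variable {V P : Type*} [NormedAddCommGroup V] [InnerProductSpace ℝ V] [MetricSpace P]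
  [NormedAddTorsor V P]

theorem AffineSubspace.infDist_eq_dist_of_vsub_mem_orthogonal {S : AffineSubspace ℝ P}
    [S.direction.HasOrthogonalProjection] {p q : P} (hp : p ∈ S) (hqp : q -ᵥ p ∈ S.directionᗮ) :
    Metric.infDist q S = dist q p := by
  have : Nonempty S := ⟨⟨p, hp⟩⟩
  rw [← EuclideanGeometry.dist_orthogonalProjection_eq_infDist,
    EuclideanGeometry.coe_orthogonalProjection_eq_iff_mem.2 ⟨hp, hqp⟩]

theorem mem_direction_affineSpan_orthogonal_of_inner_eq {s : Set V} {u : V} {r : ℝ}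
    (h : ∀ a ∈ s, ⟪u, a⟫ = r) : u ∈ (affineSpan ℝ s).directionᗮ := by
  rw [direction_affineSpan, vectorSpan_def, Submodule.mem_orthogonal']
  intro v hv
  refine Submodule.mem_orthogonal_singleton_iff_inner_right.1 (Submodule.span_le.2 ?_ hv)
  rintro _ ⟨a, ha, b, hb, rfl⟩
  rw [SetLike.mem_coe, Submodule.mem_orthogonal_singleton_iff_inner_right]
  change ⟪u, a - b⟫ = 0
  rw [inner_sub_right, h a ha, h b hb, sub_self]

end InnerProductSpace

section HypercubeFace

open EuclideanSpace

variable {d : ℕ}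

def onesBelow (d n : ℕ) : EuclideanSpace ℝ (Fin d) :=
  ∑ j ∈ Finset.univ.filter (fun j : Fin d => (j : ℕ) < n), single j 1

theorem onesBelow_apply (n : ℕ) (m : Fin d) :
    onesBelow d n m = if (m : ℕ) < n then 1 else 0 := by
  simp [onesBelow]

theorem inner_onesBelow_left (n : ℕ) (x : EuclideanSpace ℝ (Fin d)) :
    ⟪onesBelow d n, x⟫ = ∑ j ∈ Finset.univ.filter (fun j : Fin d => (j : ℕ) < n), x j := by
  simp [onesBelow, sum_inner, inner_single_left]

theorem inner_onesBelow_eq_of_forall {n : ℕ} (hn : n ≤ d) {x : EuclideanSpace ℝ (Fin d)}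
    (hx : ∀ j : Fin d, (j : ℕ) < n → x j = 1) : ⟪onesBelow d n, x⟫ = n := by
  rw [inner_onesBelow_left, Finset.sum_congr rfl fun j hj => hx j (Finset.mem_filter.1 hj).2]
  simp [Fin.card_filter_val_lt, hn]

theorem inner_single_onesBelow (n : ℕ) (j : Fin d) :
    ⟪single j 1, onesBelow d n⟫ = if (j : ℕ) < n then 1 else 0 := by
  simp [inner_single_left, onesBelow_apply]

def cubeFace (d l : ℕ) : Set (EuclideanSpace ℝ (Fin d)) :=
  {x | (∀ j, |x j| ≤ 1) ∧ ∀ j : Fin d, (j : ℕ) < l → x j = 1}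

def pulledPoints (d i : ℕ) (k : ℝ) : Set (EuclideanSpace ℝ (Fin d)) :=
  {p | ∃ j : Fin d, (j : ℕ) < i ∧ p = k • single j 1}

theorem onesBelow_mem_cubeFace (l : ℕ) : onesBelow d l ∈ cubeFace d l := by
  refine ⟨fun j => ?_, fun j hj => by rw [onesBelow_apply, if_pos hj]⟩
  rw [onesBelow_apply]
  split_ifs <;> norm_num

def spanPoint (d l i : ℕ) (k t : ℝ) : EuclideanSpace ℝ (Fin d) :=
  (1 - t * i) • onesBelow d l + (t * k) • onesBelow d i

theorem spanPoint_mem_affineSpan {l i : ℕ} (hi : i ≤ d) (k t : ℝ) :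
    spanPoint d l i k t ∈ affineSpan ℝ (cubeFace d l ∪ pulledPoints d i k) := by
  set A := affineSpan ℝ (cubeFace d l ∪ pulledPoints d i k)
  have hc : onesBelow d l ∈ A := subset_affineSpan ℝ _ (Or.inl (onesBelow_mem_cubeFace l))
  have hdir : ∑ j ∈ Finset.univ.filter (fun j : Fin d => (j : ℕ) < i),
      (k • single j 1 - onesBelow d l) ∈ A.direction :=
    Submodule.sum_mem _ fun j hj => AffineSubspace.vsub_mem_direction
      (subset_affineSpan ℝ _ (Or.inr ⟨j, (Finset.mem_filter.1 hj).2, rfl⟩)) hc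
  have hspan : spanPoint d l i k t = t • ∑ j ∈ Finset.univ.filter (fun j : Fin d => (j : ℕ) < i),
      (k • single j 1 - onesBelow d l) +ᵥ onesBelow d l := by
    rw [Finset.sum_sub_distrib, ← Finset.smul_sum, Finset.sum_const, Fin.card_filter_val_lt,
      min_eq_right hi, vadd_eq_add]
    unfold spanPoint onesBelow
    module
  rw [hspan]
  exact AffineSubspace.vadd_mem_of_mem_direction (Submodule.smul_mem _ t hdir) hc

variable {l : ℕ} {I : Fin d} (k t : ℝ)

theorem inner_sub_spanPoint_of_mem_cubeFace (hIl : (I : ℕ) < l) (hld : l ≤ d)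
    {x : EuclideanSpace ℝ (Fin d)} (hx : x ∈ cubeFace d l) :
    ⟪k • single I 1 - spanPoint d l I k t, x⟫ = k - (1 - t * I) * l - t * k * I := by
  rw [spanPoint, inner_sub_left, inner_add_left, real_inner_smul_left, real_inner_smul_left,
    real_inner_smul_left, inner_single_left, map_one, inner_onesBelow_eq_of_forall hld hx.2,
    inner_onesBelow_eq_of_forall (hIl.le.trans hld) fun j hj => hx.2 j (hj.trans hIl),
    hx.2 I hIl]
  ring

theorem inner_sub_spanPoint_of_mem_pulledPoints (hIl : (I : ℕ) ≤ l)
    {x : EuclideanSpace ℝ (Fin d)} (hx : x ∈ pulledPoints d I k) :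
    ⟪k • single I 1 - spanPoint d l I k t, x⟫ = -(1 - t * I) * k - t * k * k := by
  obtain ⟨j, hj, rfl⟩ := hx
  rw [real_inner_comm, real_inner_smul_left, spanPoint, inner_sub_right, inner_add_right,
    real_inner_smul_right, real_inner_smul_right, real_inner_smul_right, inner_single_onesBelow,
    inner_single_onesBelow, if_pos hj, if_pos (hj.trans_le hIl), inner_single_left,
    PiLp.single_apply, if_neg (Fin.ne_of_lt hj)]
  ring

theorem norm_sub_spanPoint_sq (hIl : (I : ℕ) < l) (hld : l ≤ d) :
    ‖k • single I 1 - spanPoint d l I k t‖ ^ 2 =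
      k ^ 2 - 2 * k * (1 - t * I) + (1 - t * I) ^ 2 * l + 2 * (1 - t * I) * (t * k) * I
        + (t * k) ^ 2 * I := by
  have hI : (I : ℕ) ≤ d := hIl.le.trans hld
  have gram_ll : ⟪onesBelow d l, onesBelow d l⟫ = l :=
    inner_onesBelow_eq_of_forall hld fun j hj => by rw [onesBelow_apply, if_pos hj]
  have gram_Il : ⟪onesBelow d I, onesBelow d l⟫ = I :=
    inner_onesBelow_eq_of_forall hI fun j hj => by rw [onesBelow_apply, if_pos (hj.trans hIl)]
  have gram_lI : ⟪onesBelow d l, onesBelow d I⟫ = I := by rw [real_inner_comm, gram_Il]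
  have gram_II : ⟪onesBelow d I, onesBelow d I⟫ = I :=
    inner_onesBelow_eq_of_forall hI fun j hj => by rw [onesBelow_apply, if_pos hj]
  rw [← real_inner_self_eq_norm_sq]
  simp only [spanPoint, inner_sub_left, inner_sub_right, inner_add_left, inner_add_right,
    real_inner_smul_left, real_inner_smul_right, real_inner_comm (single I 1) (onesBelow d _),
    inner_single_left, PiLp.single_apply, onesBelow_apply, map_one, one_mul, if_pos hIl,
    lt_irrefl, if_true, if_false, gram_ll, gram_lI, gram_Il, gram_II]
  ring

end HypercubeFace

theorem dist_pulled_point_affineSpan_general (d l i : ℕ) (hil : i < l) (hld : l ≤ d)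
    (k : ℝ) (hlk : (l : ℝ) ≤ k) :
    Metric.infDist
      (k • EuclideanSpace.single (⟨i, lt_of_lt_of_le hil hld⟩ : Fin d) (1 : ℝ))
      (affineSpan ℝ
        ({x : EuclideanSpace ℝ (Fin d) |
            (∀ j, |x j| ≤ 1) ∧ ∀ j : Fin d, (j : ℕ) < l → x j = 1} ∪
          {p : EuclideanSpace ℝ (Fin d) |
            ∃ j : Fin d, (j : ℕ) < i ∧ p = k • EuclideanSpace.single j (1 : ℝ)}) :
        Set (EuclideanSpace ℝ (Fin d))) =
      k * Real.sqrt
        ((k ^ 2 - 2 * ((i : ℝ) + 1) * k + ((i : ℝ) + 1) * (l : ℝ)) /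
          (k ^ 2 - 2 * (i : ℝ) * k + (i : ℝ) * (l : ℝ))) := by
  set D := k ^ 2 - 2 * i * k + i * l
  have hilR : (i : ℝ) + 1 ≤ l := by exact_mod_cast hil
  have hk : 0 ≤ k := by linarith [(Nat.cast_nonneg i : (0 : ℝ) ≤ i)]
  have hD : 0 < D := by
    nlinarith [mul_nonneg (Nat.cast_nonneg i : (0 : ℝ) ≤ i) (by linarith : (0 : ℝ) ≤ l - i)]
  obtain ⟨t, ht⟩ : ∃ t : ℝ, t * D = l - 2 * k := ⟨(l - 2 * k) / D, div_mul_cancel₀ _ hD.ne'⟩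
  have hfoot : spanPoint d l i k t ∈ affineSpan ℝ (cubeFace d l ∪ pulledPoints d i k) :=
    spanPoint_mem_affineSpan (hil.le.trans hld) k t
  have horth : k • EuclideanSpace.single (⟨i, lt_of_lt_of_le hil hld⟩ : Fin d) 1 -
      spanPoint d l i k t ∈ (affineSpan ℝ (cubeFace d l ∪ pulledPoints d i k)).directionᗮ := by
    refine mem_direction_affineSpan_orthogonal_of_inner_eq
      (r := k - (1 - t * i) * l - t * k * i) ?_
    rintro x (hx | hx)
    · exact inner_sub_spanPoint_of_mem_cubeFace k t hil hld hx
    · rw [inner_sub_spanPoint_of_mem_pulledPoints k t hil.le hx]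
      linear_combination -ht
  change Metric.infDist _ (affineSpan ℝ (cubeFace d l ∪ pulledPoints d i k) :
    Set (EuclideanSpace ℝ (Fin d))) = _
  have hsqrt (x : ℝ) : k * √x = √(k ^ 2 * x) := by
    rw [Real.sqrt_mul (sq_nonneg k), Real.sqrt_sq hk]
  rw [AffineSubspace.infDist_eq_dist_of_vsub_mem_orthogonal hfoot horth, dist_eq_norm, hsqrt,
    ← Real.sqrt_sq (norm_nonneg _), norm_sub_spanPoint_sq k t hil hld]
  congr 1
  rw [mul_div_assoc', eq_div_iff hD.ne']
  linear_combination i * (t * D + 2 * k - l) * ht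

/-- The distance between the pulled point `k e_{i+1}` and the affine span of the union of the
face `G = {x ∈ [-1,1]^d : x_1 = ⋯ = x_l = 1}` of the hypercube with the `i` pulled points
`k e_1, …, k e_i` equals `k √((k² - 2(i+1)k + (i+1)l) / (k² - 2ik + il))`. -/
theorem dist_pulled_point_affineSpan (d l i : ℕ) (hd : 1 ≤ d) (hil : i < l) (hld : l ≤ d)
    (k : ℝ) (hlk : (l : ℝ) ≤ k) (hkd : k ≤ d) :
    Metric.infDist
      (k • EuclideanSpace.single (⟨i, lt_of_lt_of_le hil hld⟩ : Fin d) (1 : ℝ))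
      (affineSpan ℝ
        ({x : EuclideanSpace ℝ (Fin d) |
            (∀ j, |x j| ≤ 1) ∧ ∀ j : Fin d, (j : ℕ) < l → x j = 1} ∪
          {p : EuclideanSpace ℝ (Fin d) |
            ∃ j : Fin d, (j : ℕ) < i ∧ p = k • EuclideanSpace.single j (1 : ℝ)}) :
        Set (EuclideanSpace ℝ (Fin d))) =
      k * Real.sqrt
        ((k ^ 2 - 2 * ((i : ℝ) + 1) * k + ((i : ℝ) + 1) * (l : ℝ)) /
          (k ^ 2 - 2 * (i : ℝ) * k + (i : ℝ) * (l : ℝ))) :=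
  dist_pulled_point_affineSpan_general d l i hil hld k hlk
end
end

section
/- For every integer d ≥ 1 and every real k with 1 ≤ k ≤ d, the d-dimensional Lebesgue measure of ρ*_{d,k} = (k β_d) ∩ γ_d equals 2^d · ∑_{i=0}^{⌊k⌋} (−1)^i (k − i)^d / (i!(d−i)!). -/
open MeasureTheory
open scoped Pointwise

noncomputable section

/-- The polytope `ρ*_{d,k} = (k β_d) ∩ γ_d`. -/
def rhoStar (d : ℕ) (k : ℝ) : Set (EuclideanSpace ℝ (Fin d)) := (k • cross d) ∩ hcube d

/-!
Slicing `{x ∈ [-1,1]ⁿ⁺¹ : ∑ |xᵢ| ≤ c}` along the first coordinate shows that its volume `Vₙ₊₁(c)`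
is `2 ∫₀¹ Vₙ(c - t) dt`, with `V₀` the Heaviside function. Hence `Vₙ = 2ⁿ Fₙ`, where `Fₙ` is the
distribution function of a sum of `n` independent uniform variables on `[0,1]`. This `Fₙ` is the
`n`-th backward difference of the truncated power `u₊ⁿ / n!`: the recursion holds because
integrating over a unit step commutes with differences and turns `u₊ⁿ / n!` into the backward
difference of `u₊ⁿ⁺¹ / (n+1)!`. Expanding the difference gives the alternating sum, in which the
terms with `i > c` vanish.
-/

open Set intervalIntegral
open scoped Nat ENNReal

section fwdDiff

variable {E : Type*} [NormedAddCommGroup E] {g : ℝ → E}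

theorem intervalIntegrable_fwdDiff_iter (hg : ∀ a b, IntervalIntegrable g volume a b)
    (h : ℝ) (n : ℕ) (a b : ℝ) : IntervalIntegrable ((fwdDiff h)^[n] g) volume a b := by
  induction n generalizing a b with
  | zero => exact hg a b
  | succ n ih =>
    rw [Function.iterate_succ_apply']
    have hshift := (ih (a + h) (b + h)).comp_add_right h
    rw [add_sub_cancel_right, add_sub_cancel_right] at hshift
    exact hshift.sub (ih a b)

theorem integral_comp_sub_fwdDiff_iter [NormedSpace ℝ E]
    (hg : ∀ a b, IntervalIntegrable g volume a b) (h : ℝ) (n : ℕ) (a b x : ℝ) :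
    ∫ t in a..b, (fwdDiff h)^[n] g (x - t) =
      (fwdDiff h)^[n] (fun y ↦ ∫ t in a..b, g (y - t)) x := by
  induction n generalizing x with
  | zero => rfl
  | succ n ih =>
    have hint (y : ℝ) : IntervalIntegrable (fun t ↦ (fwdDiff h)^[n] g (y - t)) volume a b := by
      simpa using (intervalIntegrable_fwdDiff_iter hg h n (y - a) (y - b)).comp_sub_left y
    simp only [Function.iterate_succ_apply', fwdDiff, ← ih]
    rw [← integral_sub (hint _) (hint _)]
    simp only [sub_add_eq_add_sub]

end fwdDiff

/-- `(-u)ⁿ` rather than `uⁿ`, so that no sign appears in `integral_signedTruncPow_comp_sub`. The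
value at `0` is `1` also for `n = 0`, matching `volume (crossCube 0 0) = 1`. -/
def signedTruncPow (n : ℕ) : ℝ → ℝ := (Ici 0).indicator fun u ↦ (-u) ^ n / n !

theorem intervalIntegrable_signedTruncPow (n : ℕ) (a b : ℝ) :
    IntervalIntegrable (signedTruncPow n) volume a b :=
  (((continuous_neg.pow n).div_const _).locallyIntegrable.indicator measurableSet_Ici
    |>.integrableOn_isCompact isCompact_uIcc).intervalIntegrable

theorem signedTruncPow_zero : signedTruncPow 0 = (Ici 0).indicator fun _ ↦ 1 := by
  ext
  simp [signedTruncPow]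

theorem integral_signedTruncPow (n : ℕ) (x : ℝ) :
    ∫ u in (0)..x, signedTruncPow n u = -signedTruncPow (n + 1) x := by
  rcases le_or_gt 0 x with hx | hx
  · have hpoly : ∫ u in (0)..x, signedTruncPow n u = ∫ u in (0)..x, (-u) ^ n / n ! :=
      integral_congr fun u hu ↦ indicator_of_mem (uIcc_of_le hx ▸ hu).1 _
    rw [hpoly, intervalIntegral.integral_div, integral_comp_neg (· ^ n), integral_pow,
      signedTruncPow, indicator_of_mem (mem_Ici.2 hx), Nat.factorial_succ]
    push_cast
    field_simp
    ring
  · rw [show signedTruncPow (n + 1) x = 0 from indicator_of_notMem (notMem_Ici.2 hx) _, neg_zero]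
    refine integral_zero_ae ?_
    filter_upwards [measure_eq_zero_iff_ae_notMem.1 (measure_singleton (0 : ℝ))] with u hu0 hu
    rw [uIoc_of_ge hx.le] at hu
    exact indicator_of_notMem (fun h ↦ hu0 (le_antisymm hu.2 h)) _

theorem integral_signedTruncPow_comp_sub (n : ℕ) (x : ℝ) :
    ∫ t in (0)..1, signedTruncPow n (x - t) = fwdDiff (-1) (signedTruncPow (n + 1)) x := by
  rw [integral_comp_sub_left, sub_zero,
    ← integral_interval_sub_left (intervalIntegrable_signedTruncPow n _ _)
      (intervalIntegrable_signedTruncPow n _ _),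
    integral_signedTruncPow, integral_signedTruncPow, fwdDiff, ← sub_eq_add_neg]
  ring

def irwinHallCDF (n : ℕ) : ℝ → ℝ := (fwdDiff (-1))^[n] (signedTruncPow n)

theorem intervalIntegrable_irwinHallCDF (n : ℕ) (a b : ℝ) :
    IntervalIntegrable (irwinHallCDF n) volume a b :=
  intervalIntegrable_fwdDiff_iter (intervalIntegrable_signedTruncPow n) _ n a b

theorem integral_irwinHallCDF_comp_sub (n : ℕ) (x : ℝ) :
    ∫ t in (0)..1, irwinHallCDF n (x - t) = irwinHallCDF (n + 1) x := by
  rw [irwinHallCDF, integral_comp_sub_fwdDiff_iter (intervalIntegrable_signedTruncPow n),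
    funext (integral_signedTruncPow_comp_sub n), irwinHallCDF, Function.iterate_succ_apply]

theorem irwinHallCDF_nonneg (n : ℕ) (x : ℝ) : 0 ≤ irwinHallCDF n x := by
  induction n generalizing x with
  | zero =>
    rw [irwinHallCDF, Function.iterate_zero_apply, signedTruncPow_zero]
    exact indicator_nonneg (fun _ _ ↦ zero_le_one) x
  | succ n ih =>
    rw [← integral_irwinHallCDF_comp_sub]
    exact integral_nonneg zero_le_one fun t _ ↦ ih _

theorem neg_one_pow_sub_mul_neg_one_pow {R : Type*} [Monoid R] [HasDistribNeg R] {k n : ℕ}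
    (hk : k ≤ n) : (-1 : R) ^ (n - k) * (-1) ^ n = (-1) ^ k := by
  rw [← pow_add, show n - k + n = k + 2 * (n - k) by omega, pow_add, pow_mul, neg_one_sq, one_pow,
    mul_one]

theorem irwinHallCDF_eq_sum {n : ℕ} {c : ℝ} (hc : 0 ≤ c) (hcn : ⌊c⌋₊ ≤ n) :
    irwinHallCDF n c = ∑ i ∈ Finset.range (⌊c⌋₊ + 1),
      (-1 : ℝ) ^ i * (c - i) ^ n / (i ! * (n - i)!) := by
  rw [irwinHallCDF, fwdDiff_iter_eq_sum_shift,
    ← Finset.sum_subset (Finset.range_subset_range.2 (by omega : ⌊c⌋₊ + 1 ≤ n + 1))]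
  · refine Finset.sum_congr rfl fun i hi ↦ ?_
    have hic : (i : ℝ) ≤ c :=
      (Nat.cast_le.2 (Finset.mem_range_succ_iff.1 hi)).trans (Nat.floor_le hc)
    have hin : i ≤ n := (Finset.mem_range_succ_iff.1 hi).trans hcn
    rw [nsmul_eq_mul, mul_neg_one, ← sub_eq_add_neg, signedTruncPow,
      indicator_of_mem (mem_Ici.2 (sub_nonneg.2 hic)), zsmul_eq_mul]
    push_cast
    rw [Nat.cast_choose ℝ hin, neg_pow (c - i), ← neg_one_pow_sub_mul_neg_one_pow hin]
    field_simp
  · intro i _ hi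
    have hci : c - i < 0 :=
      sub_neg.2 (Nat.lt_of_floor_lt (not_le.1 (Finset.mem_range_succ_iff.not.1 hi)))
    rw [nsmul_eq_mul, mul_neg_one, ← sub_eq_add_neg, signedTruncPow,
      indicator_of_notMem (notMem_Ici.2 hci), smul_zero]

def crossCube (n : ℕ) (c : ℝ) : Set (Fin n → ℝ) := {x | (∀ i, |x i| ≤ 1) ∧ ∑ i, |x i| ≤ c}

theorem measurableSet_crossCube (n : ℕ) (c : ℝ) : MeasurableSet (crossCube n c) := by
  simp only [crossCube, ofPred_and, ofPred_forall]
  exact (MeasurableSet.iInter fun i ↦ measurableSet_le (by fun_prop) (by fun_prop)).inter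
    (measurableSet_le (by fun_prop) (by fun_prop))

theorem cons_mem_crossCube_iff {n : ℕ} {c t : ℝ} {y : Fin n → ℝ} :
    Fin.cons t y ∈ crossCube (n + 1) c ↔ |t| ≤ 1 ∧ y ∈ crossCube n (c - |t|) := by
  simp only [crossCube, mem_ofPred_eq, Fin.forall_fin_succ, Fin.sum_univ_succ, Fin.cons_zero,
    Fin.cons_succ, le_sub_iff_add_le']
  tauto

theorem volume_crossCube_zero (c : ℝ) :
    volume (crossCube 0 c) = ENNReal.ofReal ((Ici 0).indicator (fun _ ↦ 1) c) := by
  by_cases hc : 0 ≤ c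
  · have huniv : crossCube 0 c = univ := eq_univ_of_forall fun x ↦ by simpa [crossCube] using hc
    rw [indicator_of_mem (mem_Ici.2 hc), ENNReal.ofReal_one, huniv]
    simp [volume_pi]
  · have hempty : crossCube 0 c = ∅ := eq_empty_of_forall_notMem fun x ↦ by simpa [crossCube] using hc
    rw [indicator_of_notMem (notMem_Ici.2 (not_le.1 hc)), ENNReal.ofReal_zero, hempty,
      measure_empty]

theorem volume_crossCube_succ (n : ℕ) (c : ℝ) :
    volume (crossCube (n + 1) c) = ∫⁻ t in Icc (-1) 1, volume (crossCube n (c - |t|)) := by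
  let e := MeasurableEquiv.piFinSuccAbove (fun _ : Fin (n + 1) ↦ ℝ) 0
  have he : MeasurePreserving e.symm (volume.prod volume) volume :=
    (volume_preserving_piFinSuccAbove (fun _ ↦ ℝ) 0).symm
  rw [← he.measure_preimage (measurableSet_crossCube _ _).nullMeasurableSet,
    Measure.prod_apply (e.symm.measurable (measurableSet_crossCube _ _)),
    ← lintegral_indicator measurableSet_Icc]
  congr 1 with t
  have hslice : Prod.mk t ⁻¹' (e.symm ⁻¹' crossCube (n + 1) c) =
      {y | |t| ≤ 1 ∧ y ∈ crossCube n (c - |t|)} := by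
    ext y
    simp only [mem_preimage, e, MeasurableEquiv.piFinSuccAbove_symm_apply, Fin.insertNthEquiv_zero]
    exact cons_mem_crossCube_iff
  by_cases ht : |t| ≤ 1
  · rw [indicator_of_mem (mem_Icc.2 (abs_le.1 ht)), hslice]
    simp [ht]
  · rw [indicator_of_notMem (mt (abs_le.2 ∘ mem_Icc.1) ht), hslice]
    simp [ht]

theorem setLIntegral_Icc_comp_abs (f : ℝ → ℝ≥0∞) {a : ℝ} (ha : 0 ≤ a) :
    ∫⁻ t in Icc (-a) a, f |t| = 2 * ∫⁻ t in Ioc 0 a, f t := by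
  have hpos : ∫⁻ t in Ioc 0 a, f |t| = ∫⁻ t in Ioc 0 a, f t :=
    setLIntegral_congr_fun measurableSet_Ioc fun t ht ↦ by rw [abs_of_pos ht.1]
  have hneg : ∫⁻ t in Icc (-a) 0, f |t| = ∫⁻ t in Ioc 0 a, f t := calc
    _ = ∫⁻ t in Neg.neg ⁻¹' Icc 0 a, f (-t) := by
      rw [show Neg.neg ⁻¹' Icc (0 : ℝ) a = Icc (-a) 0 by simp]
      exact setLIntegral_congr_fun measurableSet_Icc fun t ht ↦ by rw [abs_of_nonpos ht.2]
    _ = ∫⁻ t in Icc 0 a, f t :=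
      (Measure.measurePreserving_neg volume).setLIntegral_comp_preimage_emb
        measurableEmbedding_neg f _
    _ = ∫⁻ t in Ioc 0 a, f t := (setLIntegral_congr Ioc_ae_eq_Icc).symm
  rw [← Icc_union_Ioc_eq_Icc (neg_nonpos.2 ha) ha,
    lintegral_union measurableSet_Ioc ((Iic_disjoint_Ioc le_rfl).mono_left Icc_subset_Iic_self),
    hneg, hpos, two_mul]

theorem volume_crossCube (n : ℕ) (c : ℝ) :
    volume (crossCube n c) = ENNReal.ofReal (2 ^ n * irwinHallCDF n c) := by
  induction n generalizing c with
  | zero =>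
    rw [volume_crossCube_zero, pow_zero, one_mul, irwinHallCDF, Function.iterate_zero_apply,
      signedTruncPow_zero]
  | succ n ih =>
    have hint : IntervalIntegrable (fun t ↦ 2 ^ n * irwinHallCDF n (c - t)) volume 0 1 := by
      simpa using ((intervalIntegrable_irwinHallCDF n c (c - 1)).comp_sub_left c).const_mul (2 ^ n)
    calc volume (crossCube (n + 1) c)
        = ∫⁻ t in Icc (-1) 1, ENNReal.ofReal (2 ^ n * irwinHallCDF n (c - |t|)) := by
          simp only [volume_crossCube_succ, ih]
      _ = 2 * ∫⁻ t in Ioc 0 1, ENNReal.ofReal (2 ^ n * irwinHallCDF n (c - t)) :=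
          setLIntegral_Icc_comp_abs (fun s ↦ ENNReal.ofReal (2 ^ n * irwinHallCDF n (c - s)))
            zero_le_one
      _ = 2 * ENNReal.ofReal (∫ t in (0)..1, 2 ^ n * irwinHallCDF n (c - t)) := by
          rw [integral_of_le zero_le_one, ofReal_integral_eq_lintegral_ofReal hint.1
            (ae_of_all _ fun t ↦ mul_nonneg (by positivity) (irwinHallCDF_nonneg n _))]
      _ = ENNReal.ofReal (2 ^ (n + 1) * irwinHallCDF (n + 1) c) := by
          rw [intervalIntegral.integral_const_mul, integral_irwinHallCDF_comp_sub,
            ← ENNReal.ofReal_ofNat 2, ← ENNReal.ofReal_mul zero_le_two, pow_succ, mul_assoc,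
            mul_left_comm]

theorem rhoStar_eq_preimage_crossCube (d : ℕ) {k : ℝ} (hk : 0 < k) :
    rhoStar d k = (MeasurableEquiv.toLp 2 (Fin d → ℝ)).symm ⁻¹' crossCube d k := by
  ext x
  have hscale : ∑ i, |k⁻¹ * x i| ≤ 1 ↔ ∑ i, |x i| ≤ k := by
    simp_rw [abs_mul, abs_inv, abs_of_pos hk, ← Finset.mul_sum, inv_mul_le_iff₀ hk, mul_one]
  simp only [rhoStar, cross, hcube, crossCube, mem_inter_iff, mem_smul_set_iff_inv_smul_mem₀ hk.ne',
    mem_ofPred_eq, mem_preimage, PiLp.smul_apply, smul_eq_mul, hscale]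
  exact and_comm

theorem volume_rhoStar_general (d : ℕ) (k : ℝ) (hk1 : 1 ≤ k) (hkd : k ≤ d) :
    volume (rhoStar d k) =
      ENNReal.ofReal (2 ^ d * ∑ i ∈ Finset.range (⌊k⌋₊ + 1),
        (-1 : ℝ) ^ i * (k - i) ^ d / (i.factorial * (d - i).factorial)) := by
  have hk : 0 < k := zero_lt_one.trans_le hk1
  rw [rhoStar_eq_preimage_crossCube d hk,
    (EuclideanSpace.volume_preserving_symm_measurableEquiv_toLp (Fin d)).measure_preimage
      (measurableSet_crossCube d k).nullMeasurableSet,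
    volume_crossCube, irwinHallCDF_eq_sum hk.le (Nat.floor_le_of_le hkd)]

/-- The volume of `ρ*_{d,k}` is `2^d ∑_{i=0}^{⌊k⌋} (-1)^i (k-i)^d / (i!(d-i)!)`. -/
theorem volume_rhoStar (d : ℕ) (hd : 1 ≤ d) (k : ℝ) (hk1 : 1 ≤ k) (hkd : k ≤ d) :
    volume (rhoStar d k) =
      ENNReal.ofReal (2 ^ d * ∑ i ∈ Finset.range (⌊k⌋₊ + 1),
        (-1 : ℝ) ^ i * (k - i) ^ d / (i.factorial * (d - i).factorial)) :=
  volume_rhoStar_general d k hk1 hkd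
end
end
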